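/- arXiv:2306.02645 — 10 statements merged into one kernel-verified Lean document; each statement's English description precedes it below -/
import Mathlib

section
/- The natural inclusion G : ℓ₁ → c₀ is a generating operator: for every δ ∈ (0,1), the closed convex hull (in ℓ₁) of {x ∈ B_{ℓ₁} : ‖Gx‖_∞ > 1−δ} equals the closed unit ball of ℓ₁. -/
/-!
Every signed unit vector `±eₙ` has norm one and sup-norm one, so it lies in the set whose hull is
taken. Each `x` in the unit ball of `ℓ₁` is the limit of its partial sums
`∑_{i ∈ s} xᵢ eᵢ = ∑_{i ∈ s} |xᵢ| (± eᵢ)`, which are convex combinations of signed unit vectors and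
`0 = (e₀ + (-e₀)) / 2` because `∑ |xᵢ| ≤ ‖x‖₁ ≤ 1`.
-/

open Metric

theorem Convex.sum_smul_mem_of_zero_mem {R E ι : Type*} [Field R] [LinearOrder R]
    [IsStrictOrderedRing R] [AddCommGroup E] [Module R E] {C : Set E} (hC : Convex R C)
    (h0 : (0 : E) ∈ C) {s : Finset ι} {w : ι → R} {p : ι → E} (hw₀ : ∀ i ∈ s, 0 ≤ w i)
    (hw₁ : ∑ i ∈ s, w i ≤ 1) (hp : ∀ i ∈ s, p i ∈ C) : ∑ i ∈ s, w i • p i ∈ C := by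
  -- the missing weight `1 - ∑ w` goes to the point `0`
  have := hC.sum_mem (t := s.insertNone) (w := fun o => o.elim (1 - ∑ i ∈ s, w i) w)
    (z := fun o => o.elim 0 p) ?_ ?_ ?_
  · simpa [Finset.sum_insertNone] using this
  · rintro (_ | i) hi
    exacts [sub_nonneg.2 hw₁, hw₀ i (Finset.some_mem_insertNone.1 hi)]
  · simp [Finset.sum_insertNone]
  · rintro (_ | i) hi
    exacts [h0, hp i (Finset.some_mem_insertNone.1 hi)]

theorem lp.abs_apply_le_iSup_abs {α : Type*} {p : ENNReal} (hp : p ≠ 0)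
    (x : lp (fun _ : α => ℝ) p) (n : α) : |x n| ≤ ⨆ m, |x m| :=
  le_ciSup ⟨‖x‖, by rintro _ ⟨m, rfl⟩; exact lp.norm_apply_le_norm hp x m⟩ n

theorem lp.sum_abs_le_norm {α : Type*} (x : lp (fun _ : α => ℝ) 1) (s : Finset α) :
    ∑ i ∈ s, |x i| ≤ ‖x‖ := by
  simpa using lp.sum_rpow_le_norm_rpow (p := 1) (by norm_num) x s

theorem lp.zero_mem_convexHull_of_single_mem {α : Type*} [DecidableEq α] [Nonempty α]
    {T : Set (lp (fun _ : α => ℝ) 1)}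
    (hT : ∀ n (c : ℝ), |c| = 1 → lp.single 1 n c ∈ T) :
    (0 : lp (fun _ : α => ℝ) 1) ∈ convexHull ℝ T := by
  obtain ⟨n⟩ := ‹Nonempty α›
  have hmid := convex_convexHull ℝ T (subset_convexHull ℝ T (hT n 1 (by simp)))
    (subset_convexHull ℝ T (hT n (-1) (by simp))) (by norm_num : (0 : ℝ) ≤ 1 / 2)
    (by norm_num : (0 : ℝ) ≤ 1 / 2) (by norm_num)
  rwa [lp.single_neg, smul_neg, add_neg_cancel] at hmid

theorem lp.closedBall_subset_closure_convexHull {α : Type*} [DecidableEq α] [Nonempty α]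
    {T : Set (lp (fun _ : α => ℝ) 1)}
    (hT : ∀ n (c : ℝ), |c| = 1 → lp.single 1 n c ∈ T) :
    closedBall 0 1 ⊆ closure (convexHull ℝ T) := by
  intro x hx
  rw [mem_closedBall_zero_iff] at hx
  have hsign : ∀ c : ℝ, c = |c| * if 0 ≤ c then 1 else -1 := fun c => by
    split_ifs with hc
    · rw [abs_of_nonneg hc, mul_one]
    · rw [abs_of_neg (not_le.1 hc)]; ring
  have hpartial : ∀ s : Finset α, ∑ i ∈ s, lp.single 1 i (x i) ∈ convexHull ℝ T := fun s => by
    have : ∑ i ∈ s, lp.single 1 i (x i)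
        = ∑ i ∈ s, |x i| • lp.single 1 i (if 0 ≤ x i then 1 else -1 : ℝ) := by
      refine Finset.sum_congr rfl fun i _ => ?_
      rw [← lp.single_smul, smul_eq_mul, ← hsign]
    rw [this]
    refine (convex_convexHull ℝ T).sum_smul_mem_of_zero_mem
      (lp.zero_mem_convexHull_of_single_mem hT) (fun i _ => abs_nonneg _)
      ((lp.sum_abs_le_norm x s).trans hx) fun i _ => subset_convexHull ℝ T (hT _ _ ?_)
    split_ifs <;> simp
  exact mem_closure_of_tendsto (lp.hasSum_single ENNReal.one_ne_top x) (.of_forall hpartial)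

theorem stmt3 :
    ∀ δ ∈ Set.Ioo (0:ℝ) 1,
      closure (convexHull ℝ
          {x : lp (fun _ : ℕ => ℝ) 1 | ‖x‖ ≤ 1 ∧ 1 - δ < ⨆ n : ℕ, |(x : ∀ _ : ℕ, ℝ) n|})
        = Metric.closedBall (0 : lp (fun _ : ℕ => ℝ) 1) 1 := by
  rintro δ ⟨hδ, -⟩
  refine (closure_minimal ?_ isClosed_closedBall).antisymm
    (lp.closedBall_subset_closure_convexHull fun n c hc => ⟨?_, ?_⟩)
  · exact convexHull_min (fun x hx => mem_closedBall_zero_iff.2 hx.1) (convex_closedBall 0 1)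
  · rw [lp.norm_single zero_lt_one, Real.norm_eq_abs, hc]
  · refine lt_of_lt_of_le ?_ (lp.abs_apply_le_iSup_abs one_ne_zero _ n)
    rw [lp.single_apply_self, hc]
    linarith
end

section
/- Let X be a reflexive Banach space, Y a Banach space, and G : X → Y a compact operator with ‖G‖ = 1. Then ⋂_{δ>0} closedConvexHull(att(G,δ)) = closedConvexHull(att(G)), where att(G,δ) = {x ∈ B_X : ‖Gx‖ > 1−δ} and att(G) = {x ∈ S_X : ‖Gx‖ = 1}. -/
/-!
Suppose `x` lies in every `closure (convexHull (att G δ))` but not in `D = closure (convexHull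
(att G))`, and separate it from `D` by a functional `f` and a level `u`. Then every `att G δ`
contains a point `y` with `u < f y`. By reflexivity the unit ball is weakly compact, so these points
have a weak cluster point `w` with `‖w‖ ≤ 1` and `u ≤ f w`. Compactness of `G` makes `z ↦ ‖G z‖`
weakly upper semicontinuous on bounded sets (norming functionals at a finite `ε`-net of the image of
the ball give finitely many weakly closed half-spaces), hence `‖G w‖ ≥ 1`. So `w ∈ att G ⊆ D`,
contradicting `u ≤ f w`.
-/

open Metric Set Filter Bornology NormedSpace

theorem exists_lt_apply_of_mem_closure_convexHull {E : Type*} [AddCommGroup E] [Module ℝ E]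
    [TopologicalSpace E] {s : Set E} {x : E} (hx : x ∈ closure (convexHull ℝ s))
    (f : StrongDual ℝ E) {u : ℝ} (hu : u < f x) : ∃ y ∈ s, u < f y := by
  by_contra! h
  have hsub : closure (convexHull ℝ s) ⊆ {z | f z ≤ u} :=
    closure_minimal (convexHull_min h (convex_halfSpace_le f.isLinear u))
      (isClosed_le f.continuous continuous_const)
  exact (hsub hx).not_gt hu

section WeakTopology

variable {X Y : Type*} [NormedAddCommGroup X] [NormedSpace ℝ X]
  [NormedAddCommGroup Y] [NormedSpace ℝ Y]

theorem Convex.isClosed_toWeakSpace_image {s : Set X} (hc : Convex ℝ s) (hs : IsClosed s) :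
    IsClosed (toWeakSpace ℝ X '' s) := by
  rw [← hs.closure_eq, hc.toWeakSpace_closure ℝ]
  exact isClosed_closure

theorem isCompact_toWeakSpace_image_of_isBounded
    (hrefl : Function.Surjective (inclusionInDoubleDual ℝ X)) {s : Set X} (hs : IsBounded s)
    (hsc : IsClosed (toWeakSpace ℝ X '' s)) : IsCompact (toWeakSpace ℝ X '' s) := by
  rw [← hsc.closure_eq]
  refine isCompact_closure_of_isBounded ℝ X _ (by rwa [(toWeakSpace ℝ X).injective.preimage_image])
    fun ξ _ => ?_
  obtain ⟨x, hx⟩ := hrefl (WeakDual.toStrongDual ξ)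
  exact ⟨toWeakSpace ℝ X x, congrArg StrongDual.toWeakDual hx⟩

theorem IsCompactOperator.le_norm_apply_of_mem_closure_toWeakSpace {G : X →L[ℝ] Y}
    (hG : IsCompactOperator G) {s : Set X} (hs : IsBounded s) {c : ℝ}
    (hc : ∀ z ∈ s, c ≤ ‖G z‖) {x : X}
    (hx : toWeakSpace ℝ X x ∈ closure (toWeakSpace ℝ X '' s)) : c ≤ ‖G x‖ := by
  refine le_of_forall_sub_le fun ε hε => ?_
  obtain ⟨t, -, ht, hnet⟩ := finite_approx_of_totallyBounded
    ((hG.isCompact_closure_image_of_bounded hs).totallyBounded.subset subset_closure) (ε / 2)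
    (half_pos hε)
  choose g hg_norm hg_apply using fun y : Y => exists_dual_vector'' ℝ y
  simp only [RCLike.ofReal_real_eq_id, id] at hg_apply
  set H := ⋃ y ∈ t, {z : X | c - ε ≤ g y (G z)}
  have hsH : s ⊆ H := by
    intro z hz
    obtain ⟨y, hyt, hzy⟩ := mem_iUnion₂.1 (hnet (mem_image_of_mem G hz))
    rw [mem_ball, dist_eq_norm] at hzy
    have h₁ : |g y (G z - y)| ≤ ‖G z - y‖ :=
      ((g y).le_opNorm _).trans (mul_le_of_le_one_left (norm_nonneg _) (hg_norm y))
    have h₂ := norm_sub_norm_le (G z) y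
    have h₃ := hc z hz
    rw [map_sub, hg_apply] at h₁
    exact mem_iUnion₂.2 ⟨y, hyt, show c - ε ≤ g y (G z) by linarith [(abs_le.1 h₁).1]⟩
  have hH : IsClosed (toWeakSpace ℝ X '' H) := by
    rw [image_iUnion₂]
    exact ht.isClosed_biUnion fun y _ =>
      (convex_halfSpace_ge ((g y).comp G).isLinear _).isClosed_toWeakSpace_image
        (isClosed_le continuous_const ((g y).comp G).continuous)
  obtain ⟨y, -, hy⟩ := mem_iUnion₂.1
    ((toWeakSpace ℝ X).injective.mem_set_image.1 (closure_minimal (image_mono hsH) hH hx))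
  calc c - ε ≤ g y (G x) := hy
    _ ≤ ‖g y‖ * ‖G x‖ := (le_abs_self _).trans ((g y).le_opNorm _)
    _ ≤ ‖G x‖ := mul_le_of_le_one_left (norm_nonneg _) (hg_norm y)

theorem IsCompactOperator.exists_le_norm_apply
    (hrefl : Function.Surjective (inclusionInDoubleDual ℝ X)) {G : X →L[ℝ] Y}
    (hG : IsCompactOperator G) {s : Set X} (hs : IsBounded s)
    (hsc : IsClosed (toWeakSpace ℝ X '' s)) {c : ℝ} (h : ∀ δ > 0, ∃ y ∈ s, c - δ < ‖G y‖) :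
    ∃ w ∈ s, c ≤ ‖G w‖ := by
  choose y hys hy using fun n : ℕ => h (1 / ((n : ℝ) + 1)) Nat.one_div_pos_of_nat
  obtain ⟨_, ⟨w, hws, rfl⟩, hw⟩ :=
    (isCompact_toWeakSpace_image_of_isBounded hrefl hs hsc).exists_mapClusterPt
      (f := atTop) (u := toWeakSpace ℝ X ∘ y)
      (le_principal_iff.2 (mem_map.2 (univ_mem' fun n => mem_image_of_mem _ (hys n))))
  refine ⟨w, hws, le_of_forall_sub_le fun δ hδ => ?_⟩
  have hev : ∀ᶠ n in atTop, y n ∈ {z ∈ s | c - δ ≤ ‖G z‖} :=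
    (tendsto_one_div_add_atTop_nhds_zero_nat.eventually (gt_mem_nhds hδ)).mono
      fun n hn => ⟨hys n, by linarith [hy n]⟩
  exact hG.le_norm_apply_of_mem_closure_toWeakSpace (hs.subset (sep_subset _ _)) (fun z hz => hz.2)
    (hw.mem_closure_of_mem _ (mem_map.2 (hev.mono fun n hn => mem_image_of_mem _ hn)))

end WeakTopology

theorem stmt4_general {X Y : Type*} [NormedAddCommGroup X] [NormedSpace ℝ X]
    [NormedAddCommGroup Y] [NormedSpace ℝ Y]
    (hrefl : Function.Surjective (NormedSpace.inclusionInDoubleDual ℝ X))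
    (G : X →L[ℝ] Y) (hG : ‖G‖ = 1) (hcomp : IsCompactOperator G) :
    (⋂ δ ∈ Set.Ioi (0:ℝ), closure (convexHull ℝ {x : X | ‖x‖ ≤ 1 ∧ 1 - δ < ‖G x‖}))
      = closure (convexHull ℝ {x : X | ‖x‖ = 1 ∧ ‖G x‖ = 1}) := by
  refine Subset.antisymm (fun x hx => ?_) (subset_iInter₂ fun δ hδ => closure_mono
    (convexHull_mono fun z hz => ⟨hz.1.le, by rw [hz.2]; linarith [mem_Ioi.1 hδ]⟩))
  by_contra hxD
  obtain ⟨f, u, hfD, hfx⟩ :=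
    geometric_hahn_banach_closed_point (convex_convexHull ℝ _).closure isClosed_closure hxD
  have hnear : ∀ δ > 0, ∃ y ∈ closedBall 0 1 ∩ {z | u ≤ f z}, 1 - δ < ‖G y‖ := fun δ hδ => by
    obtain ⟨y, ⟨hy₁, hy₂⟩, hfy⟩ :=
      exists_lt_apply_of_mem_closure_convexHull (mem_iInter₂.1 hx δ hδ) f hfx
    exact ⟨y, ⟨mem_closedBall_zero_iff.2 hy₁, hfy.le⟩, hy₂⟩
  obtain ⟨w, ⟨hw₁, hfw⟩, hGw⟩ := hcomp.exists_le_norm_apply hrefl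
    (isBounded_closedBall.subset inter_subset_left)
    (((convex_closedBall 0 1).inter (convex_halfSpace_ge f.isLinear u)).isClosed_toWeakSpace_image
      (isClosed_closedBall.inter (isClosed_le continuous_const f.continuous))) hnear
  rw [mem_closedBall_zero_iff] at hw₁
  have hGw_le : ‖G w‖ ≤ ‖w‖ := by simpa [hG] using G.le_opNorm w
  have hw_att : ‖w‖ = 1 ∧ ‖G w‖ = 1 := ⟨by linarith, by linarith⟩
  exact (hfD w (subset_closure (subset_convexHull ℝ _ hw_att))).not_ge hfw

theorem stmt4 {X Y : Type*} [NormedAddCommGroup X] [NormedSpace ℝ X] [CompleteSpace X]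
    [NormedAddCommGroup Y] [NormedSpace ℝ Y] [CompleteSpace Y]
    (hrefl : Function.Surjective (NormedSpace.inclusionInDoubleDual ℝ X))
    (G : X →L[ℝ] Y) (hG : ‖G‖ = 1) (hcomp : IsCompactOperator G) :
    (⋂ δ ∈ Set.Ioi (0:ℝ), closure (convexHull ℝ {x : X | ‖x‖ ≤ 1 ∧ 1 - δ < ‖G x‖}))
      = closure (convexHull ℝ {x : X | ‖x‖ = 1 ∧ ‖G x‖ = 1}) :=
  stmt4_general hrefl G hG hcomp
end

section
/- Let X, Y be Banach spaces and G : X → Y a generating operator. If x₀ is a denting point of B_X, then ‖Gx₀‖ = 1. -/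
/-! A denting point of a set `B` lies in the closure of every `S ⊆ B` whose closed convex hull
contains it. Applied to `S = att(G, δ)`, this puts `x₀` in the closed set `{x | 1 - δ ≤ ‖G x‖}`
for every `δ > 0`. -/

open Metric Set

theorem mem_closure_of_mem_closure_convexHull_of_denting {E : Type*} [AddCommGroup E]
    [Module ℝ E] [PseudoMetricSpace E] {B S : Set E} {x₀ : E} (hSB : S ⊆ B)
    (hx₀ : x₀ ∈ closure (convexHull ℝ S))
    (hdent : ∀ r > (0:ℝ), x₀ ∉ closure (convexHull ℝ (B \ ball x₀ r))) :
    x₀ ∈ closure S := by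
  refine Metric.mem_closure_iff.2 fun r hr => ?_
  by_contra! hfar
  have hS : S ⊆ B \ ball x₀ r := fun x hx =>
    ⟨hSB hx, fun hxr => (hfar x hx).not_gt (by rwa [mem_ball, dist_comm] at hxr)⟩
  exact hdent r hr (closure_mono (convexHull_mono hS) hx₀)

theorem stmt6_general {X Y : Type*} [NormedAddCommGroup X] [NormedSpace ℝ X]
    [NormedAddCommGroup Y] [NormedSpace ℝ Y]
    (G : X →L[ℝ] Y) (hG : ‖G‖ = 1)
    (hgen : ∀ δ > (0:ℝ),
      closure (convexHull ℝ {x : X | ‖x‖ ≤ 1 ∧ 1 - δ < ‖G x‖}) = Metric.closedBall (0:X) 1)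
    (x₀ : X) (hx₀ : ‖x₀‖ ≤ 1)
    (hdent : ∀ r > (0:ℝ),
      x₀ ∉ closure (convexHull ℝ (Metric.closedBall (0:X) 1 \ Metric.ball x₀ r))) :
    ‖G x₀‖ = 1 := by
  have hle : ‖G x₀‖ ≤ 1 :=
    (G.le_of_opNorm_le hG.le x₀).trans (by rwa [one_mul])
  have hattained : ∀ δ > (0:ℝ), 1 - δ ≤ ‖G x₀‖ := by
    intro δ hδ
    have hmem : x₀ ∈ closure {x : X | ‖x‖ ≤ 1 ∧ 1 - δ < ‖G x‖} :=
      mem_closure_of_mem_closure_convexHull_of_denting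
        (fun x hx => mem_closedBall_zero_iff.2 hx.1)
        (by rw [hgen δ hδ]; exact mem_closedBall_zero_iff.2 hx₀) hdent
    have hclosed : IsClosed {x : X | 1 - δ ≤ ‖G x‖} := isClosed_le continuous_const (by fun_prop)
    exact closure_minimal (fun x hx => hx.2.le) hclosed hmem
  exact le_antisymm hle (le_of_forall_sub_le hattained)

theorem stmt6 {X Y : Type*} [NormedAddCommGroup X] [NormedSpace ℝ X] [CompleteSpace X]
    [NormedAddCommGroup Y] [NormedSpace ℝ Y] [CompleteSpace Y]
    (G : X →L[ℝ] Y) (hG : ‖G‖ = 1)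
    (hgen : ∀ δ > (0:ℝ),
      closure (convexHull ℝ {x : X | ‖x‖ ≤ 1 ∧ 1 - δ < ‖G x‖}) = Metric.closedBall (0:X) 1)
    (x₀ : X) (hx₀ : ‖x₀‖ ≤ 1)
    (hdent : ∀ r > (0:ℝ),
      x₀ ∉ closure (convexHull ℝ (Metric.closedBall (0:X) 1 \ Metric.ball x₀ r))) :
    ‖G x₀‖ = 1 :=
  stmt6_general G hG hgen x₀ hx₀ hdent
end

section
/- Let X, Y be Banach spaces and G : X → Y a generating operator. If x₀ ∈ S_X is a point of sliced fragmentability (for every δ > 0 there is a slice S_δ of B_X with S_δ ⊆ x₀ + δ·B_X), then ‖Gx₀‖ = 1. -/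
/-! Every slice of `B_X` contains points `x` with `‖G x‖ > 1 - δ`, since these points have closed
convex hull `B_X`. Taking the slice inside `x₀ + δ B_X` given by sliced fragmentability, such an
`x` is `δ`-close to `x₀`, and `G` is `1`-Lipschitz, so `‖G x₀‖ > 1 - 2δ` for every `δ > 0`. -/

open Metric Set

theorem exists_lt_apply_of_subset_closure_convexHull {E : Type*} [AddCommGroup E] [Module ℝ E]
    [TopologicalSpace E] {A s : Set E} (hs : s.Nonempty) (hsA : s ⊆ closure (convexHull ℝ A))
    (f : E →L[ℝ] ℝ) {c : ℝ} (hc : c < sSup (f '' s)) : ∃ x ∈ A, c < f x := by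
  by_contra! hA
  have hhull : closure (convexHull ℝ A) ⊆ {x | f x ≤ c} :=
    closure_minimal (convexHull_min hA ((convex_Iic c).linear_preimage f.toLinearMap))
      (isClosed_Iic.preimage f.continuous)
  have hsup : sSup (f '' s) ≤ c :=
    csSup_le (hs.image f) (forall_mem_image.2 fun x hx => hhull (hsA hx))
  exact hsup.not_gt hc

theorem stmt7_general {X Y : Type*} [NormedAddCommGroup X] [NormedSpace ℝ X]
    [NormedAddCommGroup Y] [NormedSpace ℝ Y]
    (G : X →L[ℝ] Y) (hG : ‖G‖ = 1)
    (hgen : ∀ δ > (0:ℝ),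
      closure (convexHull ℝ {x : X | ‖x‖ ≤ 1 ∧ 1 - δ < ‖G x‖}) = Metric.closedBall (0:X) 1)
    (x₀ : X) (hx₀ : ‖x₀‖ = 1)
    (hfrag : ∀ δ > (0:ℝ), ∃ (f : X →L[ℝ] ℝ) (α : ℝ), 0 < α ∧
      {x : X | ‖x‖ ≤ 1 ∧ sSup ((fun y => f y) '' Metric.closedBall (0:X) 1) - α < f x}
        ⊆ {x : X | ‖x - x₀‖ ≤ δ}) :
    ‖G x₀‖ = 1 := by
  have hnear : ∀ δ > (0:ℝ), 1 - 2 * δ < ‖G x₀‖ := by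
    intro δ hδ
    obtain ⟨f, α, hα, hslice⟩ := hfrag δ hδ
    obtain ⟨x, ⟨hx, hGx⟩, hfx⟩ := exists_lt_apply_of_subset_closure_convexHull
      ⟨0, mem_closedBall_self zero_le_one⟩ (hgen δ hδ).ge f (sub_lt_self _ hα)
    have hxx₀ : ‖x - x₀‖ ≤ δ := hslice ⟨hx, hfx⟩
    have hlip : ‖G x‖ - ‖G x₀‖ ≤ δ :=
      calc ‖G x‖ - ‖G x₀‖ ≤ ‖G (x - x₀)‖ := map_sub G x x₀ ▸ norm_sub_norm_le _ _
        _ ≤ ‖G‖ * ‖x - x₀‖ := G.le_opNorm _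
        _ ≤ δ := by rwa [hG, one_mul]
    linarith
  refine le_antisymm (by simpa [hG, hx₀] using G.le_opNorm x₀) ?_
  refine le_of_forall_pos_lt_add fun ε hε => ?_
  linarith [hnear (ε / 2) (half_pos hε)]

theorem stmt7 {X Y : Type*} [NormedAddCommGroup X] [NormedSpace ℝ X] [CompleteSpace X]
    [NormedAddCommGroup Y] [NormedSpace ℝ Y] [CompleteSpace Y]
    (G : X →L[ℝ] Y) (hG : ‖G‖ = 1)
    (hgen : ∀ δ > (0:ℝ),
      closure (convexHull ℝ {x : X | ‖x‖ ≤ 1 ∧ 1 - δ < ‖G x‖}) = Metric.closedBall (0:X) 1)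
    (x₀ : X) (hx₀ : ‖x₀‖ = 1)
    (hfrag : ∀ δ > (0:ℝ), ∃ (f : X →L[ℝ] ℝ) (α : ℝ), 0 < α ∧
      {x : X | ‖x‖ ≤ 1 ∧ sSup ((fun y => f y) '' Metric.closedBall (0:X) 1) - α < f x}
        ⊆ {x : X | ‖x - x₀‖ ≤ δ}) :
    ‖G x₀‖ = 1 :=
  stmt7_general G hG hgen x₀ hx₀ hfrag
end

section
/- Let X, Y be Banach spaces and G : X → Y a norm-one operator. Suppose B_X equals the closed convex hull of its denting points. Then G is generating if and only if ‖Gx‖ = 1 for every denting point x of B_X. -/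
/-!
A denting point `x` of `C` lies in the closure of every `A ⊆ C` whose closed convex hull contains
`C`: if `A` missed a ball `ball x r`, then `x ∈ C ⊆ closure (convexHull (C \ ball x r))`. For a
generating `G` this applies to every slice `{y | 1 - δ < ‖G y‖}`, so `‖G x‖ ≥ 1 - δ` by continuity.
Conversely, if `‖G‖ = 1` on the denting points, every slice contains them all, and so its closed
convex hull is already the whole ball.
-/

open Metric Set

section DentingPoint

variable {E : Type*} [SeminormedAddCommGroup E] [Module ℝ E]

def IsDentingPoint (C : Set E) (x : E) : Prop :=
  x ∈ C ∧ ∀ r > 0, x ∉ closure (convexHull ℝ (C \ ball x r))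

theorem IsDentingPoint.mem_closure_of_subset_closure_convexHull {C A : Set E} {x : E}
    (hx : IsDentingPoint C x) (hAC : A ⊆ C) (hCA : C ⊆ closure (convexHull ℝ A)) :
    x ∈ closure A := by
  refine Metric.mem_closure_iff.2 fun r hr => ?_
  by_contra! hfar
  have hA : A ⊆ C \ ball x r := fun a ha =>
    ⟨hAC ha, fun hxa => (hfar a ha).not_gt (mem_ball'.1 hxa)⟩
  exact hx.2 r hr (closure_mono (convexHull_mono hA) (hCA hx.1))

theorem IsDentingPoint.le_of_subset_closure_convexHull {C : Set E} {x : E}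
    (hx : IsDentingPoint C x) {f : E → ℝ} (hf : Continuous f) {c : ℝ}
    (h : ∀ δ > 0, C ⊆ closure (convexHull ℝ {y ∈ C | c - δ < f y})) : c ≤ f x :=
  le_of_forall_sub_le fun δ hδ =>
    closure_lt_subset_le continuous_const hf <| closure_mono (fun _ hy => hy.2) <|
      hx.mem_closure_of_subset_closure_convexHull (fun _ hy => hy.1) (h δ hδ)

end DentingPoint

theorem closure_convexHull_eq_of_subset_of_subset {E : Type*} [SeminormedAddCommGroup E]
    [NormedSpace ℝ E] {D A : Set E} (hDA : D ⊆ A) (hA : A ⊆ closure (convexHull ℝ D)) :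
    closure (convexHull ℝ A) = closure (convexHull ℝ D) :=
  (closure_minimal (convexHull_min hA (convex_convexHull ℝ D).closure) isClosed_closure).antisymm
    (closure_mono (convexHull_mono hDA))

theorem stmt8_general {X Y : Type*} [NormedAddCommGroup X] [NormedSpace ℝ X]
    [NormedAddCommGroup Y] [NormedSpace ℝ Y]
    (G : X →L[ℝ] Y) (hG : ‖G‖ = 1)
    (hB : Metric.closedBall (0:X) 1 = closure (convexHull ℝ
        {x : X | ‖x‖ ≤ 1 ∧ ∀ r > (0:ℝ),
          x ∉ closure (convexHull ℝ (Metric.closedBall (0:X) 1 \ Metric.ball x r))})) :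
    (∀ δ > (0:ℝ),
        closure (convexHull ℝ {x : X | ‖x‖ ≤ 1 ∧ 1 - δ < ‖G x‖}) = Metric.closedBall (0:X) 1)
      ↔ ∀ x : X, ‖x‖ ≤ 1 →
          (∀ r > (0:ℝ),
            x ∉ closure (convexHull ℝ (Metric.closedBall (0:X) 1 \ Metric.ball x r))) →
          ‖G x‖ = 1 := by
  constructor
  · intro hgen x hx hdent
    have hxD : IsDentingPoint (closedBall (0 : X) 1) x := ⟨mem_closedBall_zero_iff.2 hx, hdent⟩
    refine le_antisymm (hG ▸ G.unit_le_opNorm x hx) (hxD.le_of_subset_closure_convexHull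
      (f := fun y => ‖G y‖) (by fun_prop) fun δ hδ => ?_)
    simpa only [mem_closedBall_zero_iff] using (hgen δ hδ).symm.subset
  · intro hnorm δ hδ
    rw [hB]
    refine closure_convexHull_eq_of_subset_of_subset
      (fun x hx => ⟨hx.1, (hnorm x hx.1 hx.2).symm ▸ sub_lt_self 1 hδ⟩) fun y hy => ?_
    rw [← hB]
    exact mem_closedBall_zero_iff.2 hy.1

theorem stmt8 {X Y : Type*} [NormedAddCommGroup X] [NormedSpace ℝ X] [CompleteSpace X]
    [NormedAddCommGroup Y] [NormedSpace ℝ Y] [CompleteSpace Y]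
    (G : X →L[ℝ] Y) (hG : ‖G‖ = 1)
    (hB : Metric.closedBall (0:X) 1 = closure (convexHull ℝ
        {x : X | ‖x‖ ≤ 1 ∧ ∀ r > (0:ℝ),
          x ∉ closure (convexHull ℝ (Metric.closedBall (0:X) 1 \ Metric.ball x r))})) :
    (∀ δ > (0:ℝ),
        closure (convexHull ℝ {x : X | ‖x‖ ≤ 1 ∧ 1 - δ < ‖G x‖}) = Metric.closedBall (0:X) 1)
      ↔ ∀ x : X, ‖x‖ ≤ 1 →
          (∀ r > (0:ℝ),
            x ∉ closure (convexHull ℝ (Metric.closedBall (0:X) 1 \ Metric.ball x r))) →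
          ‖G x‖ = 1 :=
  stmt8_general G hG hB
end

section
/- Let X, Y be Banach spaces and G : X → Y a norm-one operator. Then G is generating if and only if G*(B_{Y*}) is a spear set of X*, i.e., if and only if max_{θ∈𝕋} sup_{y*∈B_{Y*}} ‖G*(y*) + θx*‖ = 1 + ‖x*‖ for every x* ∈ X*. -/
open Metric Set

/-!
By Hahn–Banach, a set `A ⊆ B_X` has closed convex hull `B_X` iff every functional `f` satisfies
`sup_A f = ‖f‖`. Applied to `A_δ = {x ∈ B_X : ‖G x‖ > 1 - δ}`, generating means that `f` is almost
normed at points where `G` is almost normed. Norming `G x` by some `g ∈ B_{Y*}` then gives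
`‖G* g + f‖ ≥ ‖G x‖ + f x ≈ 1 + ‖f‖`. Conversely, if `x ∈ B_X` almost norms `G* g + θ f`, then
`|g (G x) + θ f x| ≈ 1 + ‖f‖` forces both `‖G x‖ ≈ 1` and `|f x| ≈ ‖f‖`, so `x` or `-x` lies in
`A_δ` and almost norms `f`.
-/

section

variable {X Y : Type*} [NormedAddCommGroup X] [NormedSpace ℝ X]
  [NormedAddCommGroup Y] [NormedSpace ℝ Y]

lemma exists_lt_apply_of_lt_abs_apply {A : Set X} (hA : ∀ x ∈ A, -x ∈ A) (f : X →L[ℝ] ℝ)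
    {x : X} (hx : x ∈ A) {c : ℝ} (h : c < |f x|) : ∃ y ∈ A, c < f y := by
  rcases le_or_gt 0 (f x) with hfx | hfx
  · exact ⟨x, hx, by rwa [abs_of_nonneg hfx] at h⟩
  · exact ⟨-x, hA x hx, by rwa [map_neg, ← abs_of_neg hfx]⟩

lemma ContinuousLinearMap.exists_mem_closedBall_lt_apply (f : X →L[ℝ] ℝ) {c : ℝ}
    (hc : c < ‖f‖) : ∃ x ∈ closedBall (0 : X) 1, c < f x := by
  obtain ⟨x, hx, hfx⟩ := f.exists_lt_apply_of_lt_opNorm hc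
  exact exists_lt_apply_of_lt_abs_apply (fun y hy => by simpa using hy) f
    (mem_closedBall_zero_iff.2 hx.le) hfx

theorem closure_convexHull_eq_closedBall_iff {A : Set X} (hA : A ⊆ closedBall 0 1) :
    closure (convexHull ℝ A) = closedBall 0 1 ↔
      ∀ f : X →L[ℝ] ℝ, ∀ c < ‖f‖, ∃ x ∈ A, c < f x := by
  constructor
  · intro hhull f c hc
    by_contra! hfA
    obtain ⟨x, hx, hfx⟩ := f.exists_mem_closedBall_lt_apply hc
    have hsub : closure (convexHull ℝ A) ⊆ {y | f y ≤ c} :=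
      closure_minimal (convexHull_min hfA (convex_halfSpace_le f.isLinear c))
        (isClosed_le f.continuous continuous_const)
    exact (hsub (hhull ▸ hx) : f x ≤ c).not_gt hfx
  · intro hnorming
    refine (closure_minimal (convexHull_min hA (convex_closedBall 0 1))
      isClosed_closedBall).antisymm fun x₀ hx₀ => ?_
    by_contra hx₀A
    obtain ⟨f, u, hfu, hux₀⟩ := geometric_hahn_banach_closed_point
      (convex_convexHull ℝ A).closure isClosed_closure hx₀A
    have hu : u < ‖f‖ := hux₀.trans_le <|
      (le_abs_self _).trans (f.unit_le_opNorm x₀ (mem_closedBall_zero_iff.1 hx₀))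
    obtain ⟨x, hxA, hux⟩ := hnorming f u hu
    exact (hfu x (subset_closure (subset_convexHull ℝ A hxA))).not_gt hux

/-- The numbers `‖G* g + θ f‖` with `g ∈ B_{Y*}` and `θ = ±1`. -/
def spearNorms (G : X →L[ℝ] Y) (f : X →L[ℝ] ℝ) : Set ℝ :=
  {r | ∃ θ : ℝ, |θ| = 1 ∧ ∃ g : Y →L[ℝ] ℝ, ‖g‖ ≤ 1 ∧ r = ‖g.comp G + θ • f‖}

def almostNormingSet (G : X →L[ℝ] Y) (δ : ℝ) : Set X :=
  {x | ‖x‖ ≤ 1 ∧ 1 - δ < ‖G x‖}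

variable {G : X →L[ℝ] Y}

lemma norm_mem_spearNorms (G : X →L[ℝ] Y) (f : X →L[ℝ] ℝ) : ‖f‖ ∈ spearNorms G f :=
  ⟨1, abs_one, 0, by simp, by simp⟩

lemma le_of_mem_spearNorms (hG : ‖G‖ ≤ 1) {f : X →L[ℝ] ℝ} {r : ℝ} (hr : r ∈ spearNorms G f) :
    r ≤ 1 + ‖f‖ := by
  obtain ⟨θ, hθ, g, hg, rfl⟩ := hr
  calc ‖g.comp G + θ • f‖ ≤ ‖g‖ * ‖G‖ + |θ| * ‖f‖ :=
        (norm_add_le _ _).trans (add_le_add (g.opNorm_comp_le G) (norm_smul θ f).le)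
    _ ≤ 1 + ‖f‖ := by rw [hθ]; nlinarith [norm_nonneg g, norm_nonneg G]

lemma sSup_spearNorms_eq_iff (hG : ‖G‖ ≤ 1) (f : X →L[ℝ] ℝ) :
    sSup (spearNorms G f) = 1 + ‖f‖ ↔ ∀ c < 1 + ‖f‖, ∃ r ∈ spearNorms G f, c < r := by
  have hne : (spearNorms G f).Nonempty := ⟨_, norm_mem_spearNorms G f⟩
  constructor
  · intro hsup c hc
    exact exists_lt_of_lt_csSup hne (hsup ▸ hc)
  · exact csSup_eq_of_forall_le_of_forall_lt_exists_gt hne fun r hr => le_of_mem_spearNorms hG hr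

lemma almostNormingSet_subset_closedBall {δ : ℝ} : almostNormingSet G δ ⊆ closedBall 0 1 :=
  fun _ hx => mem_closedBall_zero_iff.2 hx.1

lemma neg_mem_almostNormingSet {δ : ℝ} {x : X} (hx : x ∈ almostNormingSet G δ) :
    -x ∈ almostNormingSet G δ := by
  simpa [almostNormingSet] using hx

lemma exists_norm_apply_add_apply_le_norm_comp_add (f : X →L[ℝ] ℝ) {x : X} (hx : ‖x‖ ≤ 1) :
    ∃ g : Y →L[ℝ] ℝ, ‖g‖ ≤ 1 ∧ ‖G x‖ + f x ≤ ‖g.comp G + f‖ := by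
  obtain ⟨g, hg, hgx⟩ := exists_dual_vector'' ℝ (G x)
  refine ⟨g, hg, ?_⟩
  calc ‖G x‖ + f x = (g.comp G + f) x := by simp [hgx]
    _ ≤ ‖g.comp G + f‖ := (le_abs_self _).trans ((g.comp G + f).unit_le_opNorm x hx)

lemma exists_almostNorming_of_lt_norm_comp_add (hG : ‖G‖ ≤ 1) {f : X →L[ℝ] ℝ}
    {g : Y →L[ℝ] ℝ} (hg : ‖g‖ ≤ 1) {θ ε : ℝ} (hθ : |θ| = 1)
    (h : 1 + ‖f‖ - ε < ‖g.comp G + θ • f‖) :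
    ∃ x : X, ‖x‖ ≤ 1 ∧ 1 - ε < ‖G x‖ ∧ ‖f‖ - ε < |f x| := by
  obtain ⟨x, hx, hlt⟩ := (g.comp G + θ • f).exists_lt_apply_of_lt_opNorm h
  have hGx : ‖G x‖ ≤ 1 := (G.le_opNorm_of_le hx.le).trans (by simpa using hG)
  have hgGx : |g (G x)| ≤ ‖G x‖ := (g.le_of_opNorm_le hg (G x)).trans_eq (one_mul _)
  have hfx : |f x| ≤ ‖f‖ := (f.le_opNorm_of_le hx.le).trans (by simp)
  have habs : |g (G x) + θ * f x| ≤ |g (G x)| + |f x| := by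
    simpa [abs_mul, hθ] using abs_add_le (g (G x)) (θ * f x)
  simp only [add_apply, ContinuousLinearMap.comp_apply, smul_apply, smul_eq_mul,
    Real.norm_eq_abs] at hlt
  exact ⟨x, hx.le, by linarith, by linarith⟩

lemma exists_mem_spearNorms_lt_of_norming
    (hgen : ∀ δ > 0, ∀ f : X →L[ℝ] ℝ, ∀ c < ‖f‖, ∃ x ∈ almostNormingSet G δ, c < f x)
    (f : X →L[ℝ] ℝ) : ∀ c < 1 + ‖f‖, ∃ r ∈ spearNorms G f, c < r := by
  intro c hc
  obtain ⟨x, ⟨hx, hGx⟩, hfx⟩ :=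
    hgen ((1 + ‖f‖ - c) / 2) (by linarith) f (‖f‖ - (1 + ‖f‖ - c) / 2) (by linarith)
  obtain ⟨g, hg, hle⟩ := exists_norm_apply_add_apply_le_norm_comp_add (G := G) f hx
  exact ⟨_, ⟨1, abs_one, g, hg, by rw [one_smul]⟩, by linarith⟩

lemma exists_mem_almostNormingSet_lt_of_spear (hG : ‖G‖ ≤ 1)
    (hspear : ∀ f : X →L[ℝ] ℝ, ∀ c < 1 + ‖f‖, ∃ r ∈ spearNorms G f, c < r)
    {δ : ℝ} (hδ : 0 < δ) (f : X →L[ℝ] ℝ) : ∀ c < ‖f‖, ∃ x ∈ almostNormingSet G δ, c < f x := by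
  intro c hc
  set ε := min δ (‖f‖ - c)
  have hε : 0 < ε := lt_min hδ (sub_pos.2 hc)
  obtain ⟨r, ⟨θ, hθ, g, hg, rfl⟩, hr⟩ := hspear f (1 + ‖f‖ - ε) (by linarith)
  obtain ⟨x, hx, hGx, hfx⟩ := exists_almostNorming_of_lt_norm_comp_add hG hg hθ hr
  exact exists_lt_apply_of_lt_abs_apply (fun _ => neg_mem_almostNormingSet) f
    ⟨hx, by linarith [min_le_left δ (‖f‖ - c)]⟩ (by linarith [min_le_right δ (‖f‖ - c)])

end

theorem stmt11_general {X Y : Type*} [NormedAddCommGroup X] [NormedSpace ℝ X]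
    [NormedAddCommGroup Y] [NormedSpace ℝ Y]
    (G : X →L[ℝ] Y) (hG : ‖G‖ = 1) :
    (∀ δ > (0:ℝ),
        closure (convexHull ℝ {x : X | ‖x‖ ≤ 1 ∧ 1 - δ < ‖G x‖}) = Metric.closedBall (0:X) 1)
      ↔ ∀ f : X →L[ℝ] ℝ,
          sSup {r : ℝ | ∃ θ : ℝ, |θ| = 1 ∧
            ∃ g : Y →L[ℝ] ℝ, ‖g‖ ≤ 1 ∧ r = ‖g.comp G + θ • f‖} = 1 + ‖f‖ := by
  change (∀ δ > (0:ℝ), closure (convexHull ℝ (almostNormingSet G δ)) = closedBall 0 1) ↔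
    ∀ f, sSup (spearNorms G f) = 1 + ‖f‖
  simp only [closure_convexHull_eq_closedBall_iff almostNormingSet_subset_closedBall,
    sSup_spearNorms_eq_iff hG.le]
  exact ⟨fun hgen => exists_mem_spearNorms_lt_of_norming hgen,
    fun hspear _ hδ => exists_mem_almostNormingSet_lt_of_spear hG.le hspear hδ⟩

theorem stmt11 {X Y : Type*} [NormedAddCommGroup X] [NormedSpace ℝ X] [CompleteSpace X]
    [NormedAddCommGroup Y] [NormedSpace ℝ Y] [CompleteSpace Y]
    (G : X →L[ℝ] Y) (hG : ‖G‖ = 1) :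
    (∀ δ > (0:ℝ),
        closure (convexHull ℝ {x : X | ‖x‖ ≤ 1 ∧ 1 - δ < ‖G x‖}) = Metric.closedBall (0:X) 1)
      ↔ ∀ f : X →L[ℝ] ℝ,
          sSup {r : ℝ | ∃ θ : ℝ, |θ| = 1 ∧
            ∃ g : Y →L[ℝ] ℝ, ‖g‖ ≤ 1 ∧ r = ‖g.comp G + θ • f‖} = 1 + ‖f‖ :=
  stmt11_general G hG
end

section
/- Let X₁, X₂, Y₁, Y₂ be Banach spaces and G₁ : X₁ → Y₁, G₂ : X₂ → Y₂ norm-one generating operators. Then the operator G : X₁ ⊕₁ X₂ → Y₁ ⊕₁ Y₂ defined by G(x₁, x₂) = (G₁x₁, G₂x₂) is generating. -/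
/-!
The unit ball of `X₁ ⊕₁ X₂` is the closed convex hull of the two embedded unit balls, because
`(x₁, x₂) = (1 - ‖x₂‖) • (u, 0) + ‖x₂‖ • (0, v)` with `u`, `v` in the unit balls. The isometric
embedding `x ↦ (x, 0)` satisfies `‖G (x, 0)‖ = ‖G₁ x‖`, so it maps the set where `G₁` almost
attains its norm into the corresponding set for `G`; hence the closed convex hull of the latter
contains the image of the unit ball of `X₁`, likewise of `X₂`, and therefore the whole unit ball.
-/

open Metric Set

theorem exists_mem_closedBall_smul_eq {E : Type*} [NormedAddCommGroup E] [NormedSpace ℝ E]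
    {x : E} {r : ℝ} (hr : 0 ≤ r) (hx : ‖x‖ ≤ r) : ∃ u ∈ closedBall (0 : E) 1, r • u = x := by
  refine ⟨r⁻¹ • x, ?_, ?_⟩
  · rw [mem_closedBall_zero_iff, norm_smul, norm_inv, Real.norm_of_nonneg hr]
    exact inv_mul_le_one_of_le₀ hx hr
  · rcases hr.eq_or_lt with rfl | hr
    · simpa using (norm_le_zero_iff.1 hx).symm
    · exact smul_inv_smul₀ hr.ne' x

theorem WithLp.prod_one_closedBall_subset {E F : Type*} [NormedAddCommGroup E]
    [NormedSpace ℝ E] [NormedAddCommGroup F] [NormedSpace ℝ F] {K : Set (WithLp 1 (E × F))}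
    (hK : Convex ℝ K) (hE : ∀ x ∈ closedBall (0 : E) 1, WithLp.toLp 1 (x, (0 : F)) ∈ K)
    (hF : ∀ y ∈ closedBall (0 : F) 1, WithLp.toLp 1 ((0 : E), y) ∈ K) :
    closedBall 0 1 ⊆ K := by
  intro p hp
  rw [mem_closedBall_zero_iff, WithLp.prod_norm_eq_of_L1] at hp
  have hs : 0 ≤ 1 - ‖p.snd‖ := by linarith [norm_nonneg p.fst]
  obtain ⟨u, hu, hu'⟩ := exists_mem_closedBall_smul_eq hs (by linarith : ‖p.fst‖ ≤ 1 - ‖p.snd‖)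
  obtain ⟨v, hv, hv'⟩ := exists_mem_closedBall_smul_eq (norm_nonneg p.snd) le_rfl
  have hp : p = (1 - ‖p.snd‖) • WithLp.toLp 1 (u, (0 : F))
      + ‖p.snd‖ • WithLp.toLp 1 ((0 : E), v) := by
    refine WithLp.ofLp_injective 1 (Prod.ext ?_ ?_) <;> simp [hu', hv']
  rw [hp]
  exact hK (hE u hu) (hF v hv) hs (norm_nonneg _) (by ring)

theorem ContinuousLinearMap.mapsTo_closure_convexHull {E F : Type*} [NormedAddCommGroup E]
    [NormedSpace ℝ E] [NormedAddCommGroup F] [NormedSpace ℝ F] (f : E →L[ℝ] F) {s : Set E}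
    {t : Set F} (h : MapsTo f s t) :
    MapsTo f (closure (convexHull ℝ s)) (closure (convexHull ℝ t)) := by
  refine MapsTo.closure (fun x hx => ?_) f.continuous
  exact convexHull_mono h.image_subset (f.toLinearMap.image_convexHull s ▸ mem_image_of_mem f hx)

theorem stmt13_general {X₁ X₂ Y₁ Y₂ : Type*}
    [NormedAddCommGroup X₁] [NormedSpace ℝ X₁]
    [NormedAddCommGroup X₂] [NormedSpace ℝ X₂]
    [NormedAddCommGroup Y₁] [NormedSpace ℝ Y₁]
    [NormedAddCommGroup Y₂] [NormedSpace ℝ Y₂]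
    (G₁ : X₁ →L[ℝ] Y₁) (G₂ : X₂ →L[ℝ] Y₂)
    (hg₁ : ∀ δ > (0:ℝ),
      closure (convexHull ℝ {x : X₁ | ‖x‖ ≤ 1 ∧ 1 - δ < ‖G₁ x‖}) = Metric.closedBall (0:X₁) 1)
    (hg₂ : ∀ δ > (0:ℝ),
      closure (convexHull ℝ {x : X₂ | ‖x‖ ≤ 1 ∧ 1 - δ < ‖G₂ x‖}) = Metric.closedBall (0:X₂) 1)
    (G : WithLp 1 (X₁ × X₂) →L[ℝ] WithLp 1 (Y₁ × Y₂))
    (hGdef : ∀ x₁ : X₁, ∀ x₂ : X₂,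
      WithLp.equiv 1 (Y₁ × Y₂) (G ((WithLp.equiv 1 (X₁ × X₂)).symm (x₁, x₂))) = (G₁ x₁, G₂ x₂)) :
    ∀ δ > (0:ℝ),
      closure (convexHull ℝ {p : WithLp 1 (X₁ × X₂) | ‖p‖ ≤ 1 ∧ 1 - δ < ‖G p‖})
        = Metric.closedBall (0 : WithLp 1 (X₁ × X₂)) 1 := by
  intro δ hδ
  set S := {p : WithLp 1 (X₁ × X₂) | ‖p‖ ≤ 1 ∧ 1 - δ < ‖G p‖}
  have hG : ∀ x₁ x₂, ‖G (WithLp.toLp 1 (x₁, x₂))‖ = ‖G₁ x₁‖ + ‖G₂ x₂‖ := fun x₁ x₂ => by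
    rw [WithLp.prod_norm_eq_of_L1]
    exact congrArg (fun q : Y₁ × Y₂ => ‖q.1‖ + ‖q.2‖) (hGdef x₁ x₂)
  let e₁ : X₁ →L[ℝ] WithLp 1 (X₁ × X₂) :=
    (WithLp.prodContinuousLinearEquiv 1 ℝ X₁ X₂).symm.toContinuousLinearMap.comp
      (ContinuousLinearMap.inl ℝ X₁ X₂)
  let e₂ : X₂ →L[ℝ] WithLp 1 (X₁ × X₂) :=
    (WithLp.prodContinuousLinearEquiv 1 ℝ X₁ X₂).symm.toContinuousLinearMap.comp
      (ContinuousLinearMap.inr ℝ X₁ X₂)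
  have he₁ : MapsTo e₁ {x | ‖x‖ ≤ 1 ∧ 1 - δ < ‖G₁ x‖} S := fun x hx => by
    simpa [e₁, S, hG] using hx
  have he₂ : MapsTo e₂ {x | ‖x‖ ≤ 1 ∧ 1 - δ < ‖G₂ x‖} S := fun x hx => by
    simpa [e₂, S, hG] using hx
  refine (closure_minimal (convexHull_min (fun p hp => mem_closedBall_zero_iff.2 hp.1)
    (convex_closedBall 0 1)) isClosed_closedBall).antisymm ?_
  refine WithLp.prod_one_closedBall_subset (convex_convexHull ℝ S).closure
    (fun x hx => ?_) (fun x hx => ?_)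
  · rw [← hg₁ δ hδ] at hx
    exact e₁.mapsTo_closure_convexHull he₁ hx
  · rw [← hg₂ δ hδ] at hx
    exact e₂.mapsTo_closure_convexHull he₂ hx

theorem stmt13 {X₁ X₂ Y₁ Y₂ : Type*}
    [NormedAddCommGroup X₁] [NormedSpace ℝ X₁] [CompleteSpace X₁]
    [NormedAddCommGroup X₂] [NormedSpace ℝ X₂] [CompleteSpace X₂]
    [NormedAddCommGroup Y₁] [NormedSpace ℝ Y₁] [CompleteSpace Y₁]
    [NormedAddCommGroup Y₂] [NormedSpace ℝ Y₂] [CompleteSpace Y₂]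
    (G₁ : X₁ →L[ℝ] Y₁) (G₂ : X₂ →L[ℝ] Y₂) (h₁ : ‖G₁‖ = 1) (h₂ : ‖G₂‖ = 1)
    (hg₁ : ∀ δ > (0:ℝ),
      closure (convexHull ℝ {x : X₁ | ‖x‖ ≤ 1 ∧ 1 - δ < ‖G₁ x‖}) = Metric.closedBall (0:X₁) 1)
    (hg₂ : ∀ δ > (0:ℝ),
      closure (convexHull ℝ {x : X₂ | ‖x‖ ≤ 1 ∧ 1 - δ < ‖G₂ x‖}) = Metric.closedBall (0:X₂) 1)
    (G : WithLp 1 (X₁ × X₂) →L[ℝ] WithLp 1 (Y₁ × Y₂))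
    (hGdef : ∀ x₁ : X₁, ∀ x₂ : X₂,
      WithLp.equiv 1 (Y₁ × Y₂) (G ((WithLp.equiv 1 (X₁ × X₂)).symm (x₁, x₂))) = (G₁ x₁, G₂ x₂)) :
    ∀ δ > (0:ℝ),
      closure (convexHull ℝ {p : WithLp 1 (X₁ × X₂) | ‖p‖ ≤ 1 ∧ 1 - δ < ‖G p‖})
        = Metric.closedBall (0 : WithLp 1 (X₁ × X₂)) 1 :=
  stmt13_general G₁ G₂ hg₁ hg₂ G hGdef
end

section
/- Let X, Y be Banach spaces, G : X → Y a norm-one operator, and r ∈ (0,1]. If G** : X** → Y** is r-generating, then G is r-generating. -/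
/-!
Suppose `x ∈ r • B_X` lies outside the closed convex hull of the slice
`S_δ = {z ∈ B_X | 1 - δ < ‖G z‖}`, and separate them by a functional `f` with `f ≤ u` on `S_δ`
and `u < f x`. Let `Ψ` lie in the bidual slice of `G**` at level `δ / 2`, and pick `y ∈ B_{Y*}`
with `|Ψ (y ∘ G)| > 1 - δ / 2`. Goldstine's theorem, applied to the two functionals `f` and
`y ∘ G`, approximates `Ψ` on them by points of `S_δ`, so `Ψ f ≤ u`. The bound passes to the closed
convex hull of the bidual slice, which contains the canonical image of `x`; hence `f x ≤ u`, a
contradiction.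
-/

open Metric Set

def normingSlice {X Y : Type*} [Norm X] [Norm Y] (T : X → Y) (δ : ℝ) : Set X :=
  {x | ‖x‖ ≤ 1 ∧ 1 - δ < ‖T x‖}

theorem closure_convexHull_subset_setOf_le {E : Type*} [TopologicalSpace E] [AddCommGroup E]
    [Module ℝ E] (L : E →L[ℝ] ℝ) {s : Set E} {u : ℝ} (h : ∀ x ∈ s, L x ≤ u) :
    closure (convexHull ℝ s) ⊆ {x | L x ≤ u} :=
  closure_minimal (convexHull_min h (convex_halfSpace_le L.toLinearMap.isLinear u))
    (isClosed_le L.continuous continuous_const)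

namespace ContinuousLinearMap

variable {X Y : Type*} [NormedAddCommGroup X] [NormedSpace ℝ X]
  [NormedAddCommGroup Y] [NormedSpace ℝ Y]

/-- The second adjoint `T**` of `T`, acting by `(T** Φ) y = Φ (y ∘ T)`. -/
noncomputable def bidual (T : X →L[ℝ] Y) :
    ((X →L[ℝ] ℝ) →L[ℝ] ℝ) →L[ℝ] (Y →L[ℝ] ℝ) →L[ℝ] ℝ :=
  (compL ℝ (Y →L[ℝ] ℝ) (X →L[ℝ] ℝ) ℝ).flip ((compL ℝ X Y ℝ).flip T)

theorem norm_le_of_forall_closedBall_le (L : X →L[ℝ] ℝ) {u : ℝ}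
    (h : ∀ z ∈ closedBall (0 : X) 1, L z ≤ u) : ‖L‖ ≤ u := by
  have hu : 0 ≤ u := by simpa using h 0 (mem_closedBall_self zero_le_one)
  refine L.opNorm_le_of_unit_norm hu fun z hz => ?_
  have hz' : z ∈ closedBall (0 : X) 1 := by simp [hz]
  have hnz : -z ∈ closedBall (0 : X) 1 := by simp [hz]
  rw [Real.norm_eq_abs, abs_le]
  exact ⟨neg_le.1 (by simpa using h _ hnz), h _ hz'⟩

theorem apply_comp_prod (Φ : (X →L[ℝ] ℝ) →L[ℝ] ℝ) (φ : ℝ × ℝ →L[ℝ] ℝ) (f g : X →L[ℝ] ℝ) :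
    Φ (φ.comp (f.prod g)) = φ (Φ f, Φ g) := by
  have hφ : ∀ a b : ℝ, φ (a, b) = a * φ (1, 0) + b * φ (0, 1) := fun a b => by
    rw [← smul_eq_mul, ← smul_eq_mul, ← map_smul, ← map_smul, ← map_add]
    simp
  have hcomp : φ.comp (f.prod g) = φ (1, 0) • f + φ (0, 1) • g := by
    ext z
    simp only [comp_apply, prod_apply, hφ (f z) (g z), add_apply, smul_apply, smul_eq_mul]
    ring
  rw [hcomp, map_add, map_smul, map_smul, hφ (Φ f) (Φ g), smul_eq_mul, smul_eq_mul]
  ring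

/-- Goldstine's theorem, tested on two functionals at a time. -/
theorem mem_closure_image_prod_closedBall (Φ : (X →L[ℝ] ℝ) →L[ℝ] ℝ) (hΦ : ‖Φ‖ ≤ 1)
    (f g : X →L[ℝ] ℝ) : (Φ f, Φ g) ∈ closure ((f.prod g) '' closedBall (0 : X) 1) := by
  by_contra hnot
  obtain ⟨φ, u, hu, hΦu⟩ := geometric_hahn_banach_closed_point
    ((convex_closedBall (0 : X) 1).linear_image (f.prod g).toLinearMap).closure
    isClosed_closure hnot
  have hnorm : ‖φ.comp (f.prod g)‖ ≤ u :=
    norm_le_of_forall_closedBall_le _ fun z hz =>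
      (hu _ (subset_closure (mem_image_of_mem _ hz))).le
  have hle : Φ (φ.comp (f.prod g)) ≤ u :=
    calc Φ (φ.comp (f.prod g)) ≤ ‖Φ‖ * ‖φ.comp (f.prod g)‖ :=
          (le_abs_self _).trans (Φ.le_opNorm _)
      _ ≤ 1 * u := mul_le_mul hΦ hnorm (norm_nonneg _) zero_le_one
      _ = u := one_mul u
  rw [apply_comp_prod] at hle
  linarith

theorem apply_le_of_mem_normingSlice_bidual (G : X →L[ℝ] Y) {f : X →L[ℝ] ℝ} {u δ δ' : ℝ}
    (hδ : δ' < δ) (hf : ∀ z ∈ normingSlice G δ, f z ≤ u) {Ψ : (X →L[ℝ] ℝ) →L[ℝ] ℝ}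
    (hΨ : Ψ ∈ normingSlice G.bidual δ') : Ψ f ≤ u := by
  obtain ⟨hΨ₁, hΨ₂⟩ := hΨ
  obtain ⟨y, hy, hyΨ⟩ := (G.bidual Ψ).exists_lt_apply_of_lt_opNorm hΨ₂
  change 1 - δ' < |Ψ (y.comp G)| at hyΨ
  refine le_of_forall_pos_lt_add fun ε hε => ?_
  set η := min ε (δ - δ')
  obtain ⟨_, ⟨z, hz, rfl⟩, hdist⟩ :=
    Metric.mem_closure_iff.1 (mem_closure_image_prod_closedBall Ψ hΨ₁ f (y.comp G))
      η (lt_min hε (sub_pos.2 hδ))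
  rw [Prod.dist_eq, max_lt_iff, Real.dist_eq, Real.dist_eq] at hdist
  obtain ⟨hfz, hyz⟩ := hdist
  change |Ψ f - f z| < η at hfz
  change |Ψ (y.comp G) - y (G z)| < η at hyz
  have hyGz : |y (G z)| ≤ ‖G z‖ :=
    calc |y (G z)| ≤ ‖y‖ * ‖G z‖ := y.le_opNorm _
      _ ≤ 1 * ‖G z‖ := mul_le_mul_of_nonneg_right hy.le (norm_nonneg _)
      _ = ‖G z‖ := one_mul _
  have hGz : 1 - δ < ‖G z‖ := by
    linarith [abs_sub_abs_le_abs_sub (Ψ (y.comp G)) (y (G z)), min_le_right ε (δ - δ')]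
  have hfzu := hf z ⟨mem_closedBall_zero_iff.1 hz, hGz⟩
  linarith [(abs_lt.1 hfz).2, min_le_left ε (δ - δ')]

end ContinuousLinearMap

theorem stmt14_general {X Y : Type*} [NormedAddCommGroup X] [NormedSpace ℝ X]
    [NormedAddCommGroup Y] [NormedSpace ℝ Y]
    (G : X →L[ℝ] Y) (r : ℝ)
    (h : ∀ δ > (0:ℝ),
      Metric.closedBall (0 : (X →L[ℝ] ℝ) →L[ℝ] ℝ) r ⊆
        closure (convexHull ℝ {Φ : (X →L[ℝ] ℝ) →L[ℝ] ℝ | ‖Φ‖ ≤ 1 ∧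
          1 - δ < ‖((ContinuousLinearMap.compL ℝ (Y →L[ℝ] ℝ) (X →L[ℝ] ℝ) ℝ).flip
              ((ContinuousLinearMap.compL ℝ X Y ℝ).flip G)) Φ‖})) :
    ∀ δ > (0:ℝ),
      Metric.closedBall (0:X) r ⊆
        closure (convexHull ℝ {x : X | ‖x‖ ≤ 1 ∧ 1 - δ < ‖G x‖}) := by
  intro δ hδ x hx
  by_contra hx'
  obtain ⟨f, u, hfu, hux⟩ :=
    geometric_hahn_banach_closed_point (convex_convexHull ℝ _).closure isClosed_closure hx'
  have hslice : ∀ z ∈ normingSlice G δ, f z ≤ u := fun z hz =>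
    (hfu z (subset_closure (subset_convexHull ℝ _ hz))).le
  have hιx : NormedSpace.inclusionInDoubleDual ℝ X x ∈
      closure (convexHull ℝ (normingSlice G.bidual (δ / 2))) :=
    h (δ / 2) (half_pos hδ) <|
      (dist_zero_right (NormedSpace.inclusionInDoubleDual ℝ X x)).trans_le
        ((NormedSpace.double_dual_bound ℝ X x).trans (mem_closedBall_zero_iff.1 hx))
  have hfx : f x ≤ u := closure_convexHull_subset_setOf_le (ContinuousLinearMap.apply ℝ ℝ f)
    (fun _ hΨ => G.apply_le_of_mem_normingSlice_bidual (half_lt_self hδ) hslice hΨ) hιx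
  exact hfx.not_gt hux

theorem stmt14 {X Y : Type*} [NormedAddCommGroup X] [NormedSpace ℝ X] [CompleteSpace X]
    [NormedAddCommGroup Y] [NormedSpace ℝ Y] [CompleteSpace Y]
    (G : X →L[ℝ] Y) (hG : ‖G‖ = 1) (r : ℝ) (hr : r ∈ Set.Ioc (0:ℝ) 1)
    (h : ∀ δ > (0:ℝ),
      Metric.closedBall (0 : (X →L[ℝ] ℝ) →L[ℝ] ℝ) r ⊆
        closure (convexHull ℝ {Φ : (X →L[ℝ] ℝ) →L[ℝ] ℝ | ‖Φ‖ ≤ 1 ∧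
          1 - δ < ‖((ContinuousLinearMap.compL ℝ (Y →L[ℝ] ℝ) (X →L[ℝ] ℝ) ℝ).flip
              ((ContinuousLinearMap.compL ℝ X Y ℝ).flip G)) Φ‖})) :
    ∀ δ > (0:ℝ),
      Metric.closedBall (0:X) r ⊆
        closure (convexHull ℝ {x : X | ‖x‖ ≤ 1 ∧ 1 - δ < ‖G x‖}) :=
  stmt14_general G r h
end

section
/- Let X be a Banach space. If there exists a subset 𝓑 ⊆ B_{X*} which is a spear set of X* and satisfies sup_{x*∈𝓑} |x*(x)| < 1 for every x ∈ S_X, then there exists a Banach space Y and a norm-one generating operator G : X → Y with ‖Gx‖ < 1 for every x ∈ S_X (so G does not attain its norm). One may take Y = ℓ_∞(𝓑) and (Gx)(x*) = x*(x). -/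
/-!
Put `G x = (g x)_{g ∈ B}`, so that `‖G x‖ = sup_{g ∈ B} |g x|` and the last claim is the
hypothesis on `B`. Since `B` is a spear set, for every functional `f` and `ε > 0` some `y` in
the unit ball and `g ∈ B` satisfy `|g y| > 1 - ε` and `f y > ‖f‖ - ε`. Hence every `f` almost
attains its norm on `{y | ‖y‖ ≤ 1, ‖G y‖ > 1 - δ}`, and Hahn–Banach separation shows that the
closed convex hull of this set is the whole unit ball; taking `f = 0` gives `‖G‖ = 1`.
-/

open Metric Set

section Evaluation

variable {𝕜 X : Type*} [NontriviallyNormedField 𝕜] [NormedAddCommGroup X] [NormedSpace 𝕜 X]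
  {B : Set (X →L[𝕜] 𝕜)}

theorem norm_apply_le_of_mem_closedBall_one (hB : B ⊆ closedBall 0 1) (g : B) (x : X) :
    ‖(g : X →L[𝕜] 𝕜) x‖ ≤ ‖x‖ :=
  (g.1.le_opNorm x).trans <| mul_le_of_le_one_left (norm_nonneg x) (by simpa using hB g.2)

noncomputable def evalOp (hB : B ⊆ closedBall 0 1) : X →L[𝕜] lp (fun _ : B => 𝕜) ⊤ :=
  LinearMap.mkContinuous
    { toFun := fun x => ⟨fun g => (g : X →L[𝕜] 𝕜) x,
        memℓp_infty ⟨‖x‖, by rintro _ ⟨g, rfl⟩; exact norm_apply_le_of_mem_closedBall_one hB g x⟩⟩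
      map_add' := fun x y => by ext g; exact map_add _ x y
      map_smul' := fun c x => by ext g; simp }
    1 fun x => by
      rw [one_mul]
      exact lp.norm_le_of_forall_le (norm_nonneg x) (norm_apply_le_of_mem_closedBall_one hB · x)

variable (hB : B ⊆ closedBall 0 1)
include hB

@[simp]
theorem evalOp_apply_apply (x : X) (g : B) :
    (evalOp hB x : ∀ _ : B, 𝕜) g = (g : X →L[𝕜] 𝕜) x :=
  rfl

theorem norm_evalOp_apply (x : X) : ‖evalOp hB x‖ = ⨆ g : B, ‖(g : X →L[𝕜] 𝕜) x‖ :=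
  lp.norm_eq_ciSup _

theorem norm_apply_le_norm_evalOp_apply (x : X) (g : B) :
    ‖(g : X →L[𝕜] 𝕜) x‖ ≤ ‖evalOp hB x‖ :=
  lp.norm_apply_le_norm ENNReal.top_ne_zero (evalOp hB x) g

theorem norm_evalOp_le : ‖evalOp hB‖ ≤ 1 :=
  LinearMap.mkContinuous_norm_le _ zero_le_one _

end Evaluation

section Real

variable {X : Type*} [NormedAddCommGroup X] [NormedSpace ℝ X]

theorem ContinuousLinearMap.exists_lt_apply_of_lt_opNorm_real (f : X →L[ℝ] ℝ) {r : ℝ}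
    (hr : r < ‖f‖) : ∃ x : X, ‖x‖ ≤ 1 ∧ r < f x := by
  obtain ⟨x, hx, hrx⟩ := f.exists_lt_apply_of_lt_opNorm hr
  rcases le_or_gt 0 (f x) with hpos | hneg
  · exact ⟨x, hx.le, by rwa [Real.norm_of_nonneg hpos] at hrx⟩
  · refine ⟨-x, by simpa using hx.le, ?_⟩
    rwa [Real.norm_of_nonpos hneg.le, ← map_neg] at hrx

theorem closure_convexHull_eq_closedBall_of_forall_exists_lt_apply {D : Set X}
    (hD : D ⊆ closedBall 0 1) (hnorming : ∀ f : X →L[ℝ] ℝ, ∀ ε > 0, ∃ y ∈ D, ‖f‖ - ε < f y) :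
    closure (convexHull ℝ D) = closedBall 0 1 := by
  refine (closure_minimal (convexHull_min hD (convex_closedBall 0 1)) isClosed_closedBall).antisymm
    fun x hx => ?_
  by_contra hxD
  obtain ⟨f, u, hfD, hux⟩ :=
    geometric_hahn_banach_closed_point (convex_convexHull ℝ D).closure isClosed_closure hxD
  have hfx : f x ≤ ‖f‖ :=
    (le_abs_self _).trans (f.unit_le_opNorm x (mem_closedBall_zero_iff.1 hx))
  obtain ⟨y, hyD, hy⟩ := hnorming f (‖f‖ - u) (by linarith)
  have := hfD y (subset_closure (subset_convexHull ℝ D hyD))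
  linarith

/-- Spear sets of `X*` for real scalars, where `𝕋 = {1, -1}`. -/
def IsSpearSet (B : Set (X →L[ℝ] ℝ)) : Prop :=
  ∀ f : X →L[ℝ] ℝ, sSup {r : ℝ | ∃ θ : ℝ, |θ| = 1 ∧ ∃ g ∈ B, r = ‖g + θ • f‖} = 1 + ‖f‖

theorem IsSpearSet.exists_almost_norming {B : Set (X →L[ℝ] ℝ)} (hspear : IsSpearSet B)
    (hB : B ⊆ closedBall 0 1) (f : X →L[ℝ] ℝ) {ε : ℝ} (hε : 0 < ε) :
    ∃ y : X, ‖y‖ ≤ 1 ∧ ∃ g ∈ B, 1 - ε < |g y| ∧ ‖f‖ - ε < f y := by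
  obtain ⟨_, ⟨θ, hθ, g, hg, rfl⟩, hgf⟩ : ∃ r ∈ {r : ℝ | ∃ θ : ℝ, |θ| = 1 ∧ ∃ g ∈ B, r = ‖g + θ • f‖},
      1 + ‖f‖ - ε < r := by
    refine exists_lt_of_lt_csSup ?_ (by rw [hspear f]; linarith)
    by_contra hempty
    have := hspear f
    rw [not_nonempty_iff_eq_empty.1 hempty, Real.sSup_empty] at this
    linarith [norm_nonneg f]
  obtain ⟨x, hx, hgfx⟩ := (g + θ • f).exists_lt_apply_of_lt_opNorm_real hgf
  -- `g x ≤ 1` and `θ f x ≤ ‖f‖`, so `g x + θ f x > 1 + ‖f‖ - ε` forces both terms to be large.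
  have hgx : |g x| ≤ 1 := (g.unit_le_opNorm x hx).trans (by simpa using hB hg)
  have hfx : |θ * f x| ≤ ‖f‖ := by rw [abs_mul, hθ, one_mul]; exact f.unit_le_opNorm x hx
  simp only [add_apply, smul_apply, smul_eq_mul] at hgfx
  refine ⟨θ • x, by rwa [norm_smul, Real.norm_eq_abs, hθ, one_mul], g, hg, ?_, ?_⟩
  · rw [map_smul, smul_eq_mul, abs_mul, hθ, one_mul]
    linarith [le_abs_self (θ * f x), le_abs_self (g x)]
  · rw [map_smul, smul_eq_mul]
    linarith [le_abs_self (g x)]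

end Real

theorem stmt17_general {X : Type*} [NormedAddCommGroup X] [NormedSpace ℝ X]
    (B : Set (X →L[ℝ] ℝ)) (hB : B ⊆ Metric.closedBall 0 1)
    (hspear : ∀ f : X →L[ℝ] ℝ,
      sSup {r : ℝ | ∃ θ : ℝ, |θ| = 1 ∧ ∃ g ∈ B, r = ‖g + θ • f‖} = 1 + ‖f‖)
    (hsup : ∀ x : X, ‖x‖ = 1 → sSup ((fun g : X →L[ℝ] ℝ => |g x|) '' B) < 1) :
    ∃ G : X →L[ℝ] lp (fun _ : B => ℝ) ⊤,
      (∀ (x : X) (g : B), (G x : ∀ _ : B, ℝ) g = (g : X →L[ℝ] ℝ) x) ∧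
      ‖G‖ = 1 ∧
      (∀ δ > (0:ℝ),
        closure (convexHull ℝ {x : X | ‖x‖ ≤ 1 ∧ 1 - δ < ‖G x‖}) = Metric.closedBall (0:X) 1) ∧
      ∀ x : X, ‖x‖ = 1 → ‖G x‖ < 1 := by
  have hnorming (f : X →L[ℝ] ℝ) (ε : ℝ) (hε : 0 < ε) :
      ∃ y : X, ‖y‖ ≤ 1 ∧ 1 - ε < ‖evalOp hB y‖ ∧ ‖f‖ - ε < f y := by
    obtain ⟨y, hy, g, hg, hgy, hfy⟩ := IsSpearSet.exists_almost_norming hspear hB f hε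
    exact ⟨y, hy, hgy.trans_le (norm_apply_le_norm_evalOp_apply hB y ⟨g, hg⟩), hfy⟩
  refine ⟨evalOp hB, evalOp_apply_apply hB, ?_, fun δ hδ => ?_, fun x hx => ?_⟩
  · refine (norm_evalOp_le hB).antisymm (le_of_forall_pos_lt_add fun ε hε => ?_)
    obtain ⟨y, hy, hGy, -⟩ := hnorming 0 ε hε
    linarith [(evalOp hB).le_opNorm_of_le hy]
  · refine closure_convexHull_eq_closedBall_of_forall_exists_lt_apply
      (fun x hx => mem_closedBall_zero_iff.2 hx.1) fun f ε hε => ?_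
    obtain ⟨y, hy, hGy, hfy⟩ := hnorming f (min δ ε) (lt_min hδ hε)
    exact ⟨y, ⟨hy, by linarith [min_le_left δ ε]⟩, by linarith [min_le_right δ ε]⟩
  · simpa only [norm_evalOp_apply, Real.norm_eq_abs, sSup_image'] using hsup x hx

theorem stmt17 {X : Type*} [NormedAddCommGroup X] [NormedSpace ℝ X] [CompleteSpace X]
    (B : Set (X →L[ℝ] ℝ)) (hB : B ⊆ Metric.closedBall 0 1)
    (hspear : ∀ f : X →L[ℝ] ℝ,
      sSup {r : ℝ | ∃ θ : ℝ, |θ| = 1 ∧ ∃ g ∈ B, r = ‖g + θ • f‖} = 1 + ‖f‖)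
    (hsup : ∀ x : X, ‖x‖ = 1 → sSup ((fun g : X →L[ℝ] ℝ => |g x|) '' B) < 1) :
    ∃ G : X →L[ℝ] lp (fun _ : B => ℝ) ⊤,
      (∀ (x : X) (g : B), (G x : ∀ _ : B, ℝ) g = (g : X →L[ℝ] ℝ) x) ∧
      ‖G‖ = 1 ∧
      (∀ δ > (0:ℝ),
        closure (convexHull ℝ {x : X | ‖x‖ ≤ 1 ∧ 1 - δ < ‖G x‖}) = Metric.closedBall (0:X) 1) ∧
      ∀ x : X, ‖x‖ = 1 → ‖G x‖ < 1 :=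
  stmt17_general B hB hspear hsup
end

section
/- Let (Ω,Σ,μ) be a positive measure space and Y a Banach space. Then the closed unit ball of L_∞(μ,Y) equals the closed convex hull of {g ∈ L_∞(μ,Y) : ‖g(t)‖ = 1 for μ-almost every t}. -/
/-!
Write `f t = ‖f t‖ • u t` with `u` measurable of unit norm. A number `r ∈ [-1, 1]` is within
`2 / n` of the average of the `n` signs made of `⌊n (1 + r) / 2⌋` ones followed by minus ones.
Taking `r = ‖f t‖` pointwise produces `n` functions `± u` of unit norm whose average is within
`2 / n` of `f` in `L∞`.
-/

open Metric Set MeasureTheory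

lemma sum_range_ite_lt_one_neg_one {n k : ℕ} (hk : k ≤ n) :
    ∑ i ∈ Finset.range n, (if i < k then (1 : ℝ) else -1) = 2 * k - n := by
  obtain ⟨l, rfl⟩ := Nat.exists_eq_add_of_le hk
  rw [Finset.sum_range_add, Finset.sum_ite_of_true fun i hi => Finset.mem_range.mp hi]
  simp
  ring

noncomputable def signApprox (n : ℕ) (r : ℝ) (i : ℕ) : ℝ :=
  if i < ⌊n * (1 + r) / 2⌋₊ then 1 else -1

lemma abs_signApprox (n : ℕ) (r : ℝ) (i : ℕ) : |signApprox n r i| = 1 := by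
  unfold signApprox
  split_ifs <;> simp

lemma measurable_signApprox (n i : ℕ) : Measurable fun r => signApprox n r i :=
  Measurable.ite (measurableSet_lt measurable_const (by fun_prop)) measurable_const
    measurable_const

lemma abs_sub_sum_signApprox_lt {n : ℕ} (hn : 0 < n) {r : ℝ} (hr : |r| ≤ 1) :
    |r - ∑ i ∈ Finset.range n, (n : ℝ)⁻¹ * signApprox n r i| < 2 / n := by
  obtain ⟨hr₁, hr₂⟩ := abs_le.mp hr
  have hn' : (0 : ℝ) < n := by exact_mod_cast hn
  set x : ℝ := n * (1 + r) / 2 with hx_def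
  have hx : 0 ≤ x := div_nonneg (mul_nonneg hn'.le (by linarith)) zero_le_two
  have hkn : ⌊x⌋₊ ≤ n := Nat.floor_le_of_le (by rw [hx_def]; nlinarith)
  have hsum : ∑ i ∈ Finset.range n, (n : ℝ)⁻¹ * signApprox n r i = (2 * ⌊x⌋₊ - n) / n := by
    rw [← Finset.mul_sum, inv_mul_eq_div]
    exact congrArg (· / (n : ℝ)) (sum_range_ite_lt_one_neg_one hkn)
  rw [hsum, sub_div' hn'.ne', abs_div, abs_of_pos hn', div_lt_div_iff_of_pos_right hn', abs_lt]
  constructor <;> linarith [Nat.floor_le hx, Nat.lt_floor_add_one x]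

namespace MeasureTheory.StronglyMeasurable

variable {α Y : Type*} [MeasurableSpace α] [NormedAddCommGroup Y] [NormedSpace ℝ Y] [Nontrivial Y]
  {f : α → Y}

lemma exists_norm_smul_eq (hf : StronglyMeasurable f) :
    ∃ u : α → Y, StronglyMeasurable u ∧ (∀ t, ‖u t‖ = 1) ∧ ∀ t, ‖f t‖ • u t = f t := by
  classical
  obtain ⟨e, he⟩ := exists_norm_eq Y zero_le_one
  refine ⟨fun t => if f t = 0 then e else ‖f t‖⁻¹ • f t, ?_, fun t => ?_, fun t => ?_⟩
  · exact .ite (hf.measurableSet_eq_fun stronglyMeasurable_const) stronglyMeasurable_const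
      (hf.norm.measurable.inv.stronglyMeasurable.smul hf)
  · dsimp only
    split_ifs with h
    · exact he
    · rw [norm_smul, norm_inv, norm_norm, inv_mul_cancel₀ (norm_ne_zero_iff.mpr h)]
  · dsimp only
    split_ifs with h
    · simp [h]
    · rw [smul_inv_smul₀ (norm_ne_zero_iff.mpr h)]

lemma exists_unit_average_approx (hf : StronglyMeasurable f) {n : ℕ} (hn : 0 < n) :
    ∃ g : ℕ → α → Y, (∀ i, StronglyMeasurable (g i)) ∧ (∀ i t, ‖g i t‖ = 1) ∧
      ∀ t, ‖f t‖ ≤ 1 → ‖f t - ∑ i ∈ Finset.range n, (n : ℝ)⁻¹ • g i t‖ < 2 / n := by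
  obtain ⟨u, hu, hu_norm, hfu⟩ := hf.exists_norm_smul_eq
  refine ⟨fun i t => signApprox n ‖f t‖ i • u t, fun i => ?_, fun i t => ?_, fun t ht => ?_⟩
  · exact ((measurable_signApprox n i).comp hf.norm.measurable).stronglyMeasurable.smul hu
  · rw [norm_smul, Real.norm_eq_abs, abs_signApprox, hu_norm, one_mul]
  · have hsum : ∑ i ∈ Finset.range n, (n : ℝ)⁻¹ • signApprox n ‖f t‖ i • u t =
        (∑ i ∈ Finset.range n, (n : ℝ)⁻¹ * signApprox n ‖f t‖ i) • u t := by
      simp only [smul_smul, Finset.sum_smul]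
    rw [hsum]
    nth_rw 1 [← hfu t]
    rw [← sub_smul, norm_smul, hu_norm, mul_one, Real.norm_eq_abs]
    exact abs_sub_sum_signApprox_lt hn (by rwa [abs_norm])

end MeasureTheory.StronglyMeasurable

namespace MeasureTheory.Lp

variable {α E : Type*} [MeasurableSpace α] [NormedAddCommGroup E] {μ : Measure α}

lemma norm_le_of_ae_bound_top {f : Lp E ⊤ μ} {C : ℝ} (hC : 0 ≤ C)
    (hf : ∀ᵐ t ∂μ, ‖f t‖ ≤ C) : ‖f‖ ≤ C := by
  rw [Lp.norm_def, eLpNorm_exponent_top]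
  exact ENNReal.toReal_le_of_le_ofReal hC (eLpNormEssSup_le_of_ae_bound hf)

lemma ae_norm_le_norm_top (f : Lp E ⊤ μ) : ∀ᵐ t ∂μ, ‖f t‖ ≤ ‖f‖ := by
  rw [Lp.norm_def, toReal_eLpNorm (Lp.aestronglyMeasurable f)]
  exact ae_le_lpNorm_exponent_top (Lp.memLp f)

lemma coeFn_sum {ι : Type*} {p : ENNReal} (s : Finset ι) (F : ι → Lp E p μ) :
    ⇑(∑ i ∈ s, F i) =ᵐ[μ] ∑ i ∈ s, ⇑(F i) := by
  classical
  induction s using Finset.induction_on with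
  | empty => simpa using Lp.coeFn_zero E p μ
  | insert a s ha ih =>
    simp only [Finset.sum_insert ha]
    exact (Lp.coeFn_add _ _).trans ih.add_left

lemma unitNorm_subset_closedBall_top (μ : Measure α) :
    {g : Lp E ⊤ μ | ∀ᵐ t ∂μ, ‖g t‖ = 1} ⊆ closedBall 0 1 :=
  fun g (hg : ∀ᵐ t ∂μ, ‖g t‖ = 1) => mem_closedBall_zero_iff.mpr <|
    norm_le_of_ae_bound_top zero_le_one (hg.mono fun _ ht => ht.le)

lemma exists_mem_convexHull_unitNorm_dist_le [NormedSpace ℝ E] [Nontrivial E]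
    {f : Lp E ⊤ μ} (hf : ‖f‖ ≤ 1) {n : ℕ} (hn : 0 < n) :
    ∃ h ∈ convexHull ℝ {g : Lp E ⊤ μ | ∀ᵐ t ∂μ, ‖g t‖ = 1}, dist f h ≤ 2 / n := by
  have hf_meas := Lp.aestronglyMeasurable f
  obtain ⟨g, hg_meas, hg_norm, hfg⟩ :=
    hf_meas.stronglyMeasurable_mk.exists_unit_average_approx hn
  have hg_memLp (i : ℕ) : MemLp (g i) ⊤ μ :=
    memLp_top_of_bound (hg_meas i).aestronglyMeasurable 1 (.of_forall fun t => (hg_norm i t).le)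
  set G : ℕ → Lp E ⊤ μ := fun i => (hg_memLp i).toLp (g i)
  have hG (i : ℕ) : ∀ᵐ t ∂μ, ‖G i t‖ = 1 := by
    filter_upwards [(hg_memLp i).coeFn_toLp] with t ht
    rw [ht, hg_norm]
  refine ⟨∑ i ∈ Finset.range n, (n : ℝ)⁻¹ • G i, ?_, ?_⟩
  · refine (convex_convexHull ℝ _).sum_mem (fun _ _ => by positivity) ?_
      fun i _ => subset_convexHull ℝ _ (hG i)
    rw [Finset.sum_const, Finset.card_range, nsmul_eq_mul]
    exact mul_inv_cancel₀ (by exact_mod_cast hn.ne')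
  have hcoe : ∀ᵐ t ∂μ, ∀ i ∈ Finset.range n, ((n : ℝ)⁻¹ • G i) t = (n : ℝ)⁻¹ • g i t := by
    refine (Finset.eventually_all _).mpr fun i _ => ?_
    filter_upwards [Lp.coeFn_smul (n : ℝ)⁻¹ (G i), (hg_memLp i).coeFn_toLp] with t hsmul ht
    rw [hsmul, Pi.smul_apply, ht]
  rw [dist_eq_norm_sub]
  refine norm_le_of_ae_bound_top (by positivity) ?_
  filter_upwards [Lp.coeFn_sub f _, Lp.coeFn_sum (Finset.range n) fun i => (n : ℝ)⁻¹ • G i,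
    hf_meas.ae_eq_mk, ae_norm_le_norm_top f, hcoe] with t hsub hsum hmk hbound hterms
  rw [hsub, Pi.sub_apply, hsum, Finset.sum_apply, Finset.sum_congr rfl hterms, hmk]
  exact (hfg t (hmk ▸ hbound.trans hf)).le

end MeasureTheory.Lp

theorem stmt19_general {α Y : Type*} [MeasurableSpace α] (μ : Measure α)
    [NormedAddCommGroup Y] [NormedSpace ℝ Y] [Nontrivial Y] :
    Metric.closedBall (0 : Lp Y ⊤ μ) 1 =
      closure (convexHull ℝ {g : Lp Y ⊤ μ | ∀ᵐ t ∂μ, ‖(g : α → Y) t‖ = 1}) := by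
  refine Subset.antisymm (fun f hf => Metric.mem_closure_iff.mpr fun ε hε => ?_)
    (closure_minimal (convexHull_min (Lp.unitNorm_subset_closedBall_top μ)
      (convex_closedBall _ _)) isClosed_closedBall)
  obtain ⟨n, hn⟩ := exists_nat_gt (2 / ε)
  have hn_pos : (0 : ℝ) < n := (div_pos two_pos hε).trans hn
  obtain ⟨h, hh, hfh⟩ := Lp.exists_mem_convexHull_unitNorm_dist_le
    (mem_closedBall_zero_iff.mp hf) (Nat.cast_pos.mp hn_pos)
  exact ⟨h, hh, hfh.trans_lt ((div_lt_iff₀ hn_pos).mpr ((div_lt_iff₀' hε).mp hn))⟩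

theorem stmt19 {α Y : Type*} [MeasurableSpace α] (μ : Measure α)
    [NormedAddCommGroup Y] [NormedSpace ℝ Y] [CompleteSpace Y] [Nontrivial Y] :
    Metric.closedBall (0 : Lp Y ⊤ μ) 1 =
      closure (convexHull ℝ {g : Lp Y ⊤ μ | ∀ᵐ t ∂μ, ‖(g : α → Y) t‖ = 1}) :=
  stmt19_general μ
end
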